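/- Assume k is even with k ≥ 2 and p_j > 0 for all j; let p_min = min_j p_j and ‖p‖₂ the Euclidean norm of p. Let 0 < η ≤ 1/(10·k²·‖p‖₂), and define the gradient-descent iterates w(t+1) = w(t) − η·G(w(t)), where G(w)_j = k·p_j·(B(w)^{k−1} w_j − A(w)^{k−1} w*_j). If the initialization w(0) satisfies 0 < B(w(0)) ≤ |A(w(0))|, then for every t ≥ 0, L(w(t)) ≤ (1 − η·k·p_min·A(w(0))^{2k−2}/8)^t · L(w(0)). -/

import Mathlib

/-!
Writing `A`, `B` for `alignA`, `normB` and `a = A(w 0)`: the hypothesis `B(w 0) ≤ |a|` gives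
`L(w 0) ≤ (1 - a^k)/2`, and as long as the loss has not increased this says
`B^k + a^k ≤ 2 A^k`. In that region `B^(k/2) ≤ 2` and `A^(2k-2) ≥ a^(2k-2)/4`. Expanding
`L(w - ηG)` to second order in `A` and `B` (the tangent line bounds `A^k` from below since `k`
is even, a Taylor bound with remainder controls `B^k`) yields the descent inequality
`L(w - ηG) ≤ L(w) - η‖G‖²/4`, and the Polyak–Łojasiewicz inequality
`‖G‖² ≥ 2 k p_min A^(2k-2) L` turns it into the contraction
`L(w - ηG) ≤ (1 - η k p_min a^(2k-2)/8) L(w)`; in particular the loss stays below `L(w 0)`.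
-/

/-- The weighted alignment `A(w) = ∑_j p_j w_j w*_j`. -/
noncomputable def alignA (d : ℕ) (p wstar w : Fin d → ℝ) : ℝ :=
  ∑ j, p j * w j * wstar j

/-- The weighted norm `B(w) = ∑_j p_j w_j²`. -/
noncomputable def normB (d : ℕ) (p w : Fin d → ℝ) : ℝ :=
  ∑ j, p j * (w j) ^ 2

/-- The population loss `L(w) = (1/2)(B(w)^k − 2 A(w)^k + 1)`. -/
noncomputable def popLoss (d k : ℕ) (p wstar w : Fin d → ℝ) : ℝ :=
  (1 / 2) * ((normB d p w) ^ k - 2 * (alignA d p wstar w) ^ k + 1)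

theorem Even.pow_tangent_le {n : ℕ} (hn : Even n) (x y : ℝ) :
    y ^ n + n * y ^ (n - 1) * (x - y) ≤ x ^ n := by
  obtain _ | m := n
  · simp
  -- reduce to Bernoulli's inequality for `|y|` and `|x|`
  have hyy : |y| ^ m * |y| = y ^ m * y := by rw [← pow_succ, ← pow_succ, hn.pow_abs]
  have hxy : y ^ m * x ≤ |y| ^ m * |x| := by
    rw [← abs_pow, ← abs_mul]; exact le_abs_self _
  have key := pow_add_mul_le_add_pow (abs_nonneg y)
    (by linarith [abs_nonneg x, abs_nonneg y] : (0 : ℝ) ≤ 2 * |y| + (|x| - |y|)) (m + 1)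
  rw [add_sub_cancel, hn.pow_abs, hn.pow_abs] at key
  simp only [Nat.add_sub_cancel, pow_succ] at key ⊢
  push_cast at key ⊢
  have hm : (0 : ℝ) ≤ m + 1 := by positivity
  nlinarith [mul_le_mul_of_nonneg_left hxy hm]

theorem pow_le_tangent_add_sq {x y β : ℝ} (hx : 0 ≤ x) (hy : 0 ≤ y) (hxβ : x ≤ β)
    (hyβ : y ≤ β) {n : ℕ} (hn : 2 ≤ n) :
    y ^ n ≤ x ^ n + n * x ^ (n - 1) * (y - x) + n * (n - 1) / 2 * β ^ (n - 2) * (y - x) ^ 2 := by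
  obtain ⟨n, rfl⟩ := Nat.exists_eq_add_of_le' hn
  clear hn
  simp only [Nat.add_sub_cancel, show n + 2 - 1 = n + 1 by omega]
  push_cast
  rw [show (n : ℝ) + 2 - 1 = n + 1 by ring]
  induction n with
  | zero => nlinarith
  | succ n ih =>
    have htan := pow_add_mul_le_add_pow hx (by linarith : 0 ≤ 2 * x + (y - x)) (n + 2)
    simp only [add_sub_cancel, show n + 2 - 1 = n + 1 by omega] at htan
    push_cast at htan ih ⊢
    -- the error term of exponent `n + 3` is `y` times that of exponent `n + 2`,
    -- plus `(n + 2) x^(n+1) (y - x)²`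
    have hE : y * (y ^ (n + 2) - x ^ (n + 2) - (n + 2) * x ^ (n + 1) * (y - x))
        ≤ β * ((n + 2) * (n + 1) / 2 * β ^ n * (y - x) ^ 2) :=
      mul_le_mul hyβ (by linarith) (by linarith) (hy.trans hyβ)
    have hx' : (n + 2) * x ^ (n + 1) * (y - x) ^ 2 ≤ (n + 2) * β ^ (n + 1) * (y - x) ^ 2 := by
      gcongr
    linear_combination hE + hx'

theorem pow_mul_loss_le_mul_residual {k : ℕ} (hk : 1 ≤ k) {A B : ℝ} (hAB : A ^ 2 ≤ B) :
    A ^ (2 * k - 2) * (B ^ k - 2 * A ^ k + 1)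
      ≤ k * (B ^ (2 * k - 1) - 2 * A ^ k * B ^ (k - 1) + A ^ (2 * k - 2)) := by
  obtain ⟨n, rfl⟩ := Nat.exists_eq_add_of_le' hk
  simp only [show 2 * (n + 1) - 2 = 2 * n by omega, show 2 * (n + 1) - 1 = 2 * n + 1 by omega,
    Nat.add_sub_cancel]
  rcases (sq_nonneg A).trans hAB |>.eq_or_lt with hB | hB
  · obtain rfl : A = 0 :=
      pow_eq_zero_iff two_ne_zero |>.mp (le_antisymm (hB ▸ hAB) (sq_nonneg A))
    subst hB
    rcases n with _ | n <;> simp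
  have hc : A ^ (2 * n) = (A ^ 2) ^ n := by rw [← pow_mul]
  have hy : (A ^ (n + 1)) ^ 2 = A ^ (2 * n) * A ^ 2 := by rw [← pow_mul, ← pow_add]; ring_nf
  have hcu : A ^ (2 * n) ≤ B ^ n := hc ▸ pow_le_pow_left₀ (sq_nonneg A) hAB n
  have hc0 : 0 ≤ A ^ (2 * n) := hc ▸ pow_nonneg (sq_nonneg A) n
  have htan : B ^ (n + 1) - (A ^ (n + 1)) ^ 2 ≤ (n + 1) * B ^ n * (B - A ^ 2) := by
    have := pow_add_mul_le_add_pow hB.le (by linarith [sq_nonneg A] : 0 ≤ 2 * B + (A ^ 2 - B))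
      (n + 1)
    rw [add_sub_cancel, Nat.add_sub_cancel] at this
    push_cast at this
    rw [← pow_mul, mul_comm, pow_mul]
    linarith
  set u := B ^ n
  set c := A ^ (2 * n)
  set y := A ^ (n + 1)
  set x := B ^ (n + 1)
  have hx : x = u * B := pow_succ B n
  have hB2 : B ^ (2 * n + 1) = u ^ 2 * B := by rw [← pow_mul, ← pow_succ]; ring_nf
  have hxB : 0 < x * B := by positivity
  -- after multiplying by `x B`, compare the `x - y²` and the `(x - y)²` parts separately
  refine le_of_mul_le_mul_right ?_ hxB
  have h1 : c * B * (x - y ^ 2) ≤ (n + 1) * x * (c * (B - A ^ 2)) := by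
    calc c * B * (x - y ^ 2) ≤ c * B * ((n + 1) * u * (B - A ^ 2)) :=
          mul_le_mul_of_nonneg_left htan (by positivity)
      _ = (n + 1) * x * (c * (B - A ^ 2)) := by rw [hx]; ring
  have h2 : c * B * (x - y) ^ 2 ≤ (n + 1) * x * (x - y) ^ 2 := by
    refine mul_le_mul_of_nonneg_right ?_ (sq_nonneg _)
    have : 0 ≤ (n : ℝ) * x := by positivity
    nlinarith
  calc c * (x - 2 * y + 1) * (x * B) = c * B * (x - y ^ 2) + c * B * (x - y) ^ 2 := by ring
    _ ≤ (n + 1) * x * (c * (B - A ^ 2)) + (n + 1) * x * (x - y) ^ 2 := add_le_add h1 h2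
    _ = _ := by push_cast; rw [hB2, hx]; linear_combination (-(n + 1) * u * B) * hy

theorem pow_two_mul_sub_two_le_of_pow_le {k : ℕ} (hk : Even k) (hk0 : k ≠ 0) {a A : ℝ}
    (h : a ^ k ≤ 2 * A ^ k) : a ^ (2 * k - 2) ≤ 4 * A ^ (2 * k - 2) := by
  have he : Even (2 * k - 2) := ⟨k - 1, by omega⟩
  refine (pow_le_pow_iff_left₀ (he.pow_nonneg a)
    (mul_nonneg (by norm_num) (he.pow_nonneg A)) hk0).mp ?_
  calc (a ^ (2 * k - 2)) ^ k = (a ^ k) ^ (2 * k - 2) := by rw [← pow_mul, ← pow_mul, mul_comm]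
    _ ≤ (2 * A ^ k) ^ (2 * k - 2) := pow_le_pow_left₀ (hk.pow_nonneg a) h _
    _ = 2 ^ (2 * k - 2) * (A ^ (2 * k - 2)) ^ k := by
        rw [mul_pow, ← pow_mul, ← pow_mul, mul_comm k]
    _ ≤ 4 ^ k * (A ^ (2 * k - 2)) ^ k := by
        refine mul_le_mul_of_nonneg_right ?_ (pow_nonneg (he.pow_nonneg A) k)
        calc (2 : ℝ) ^ (2 * k - 2) ≤ 2 ^ (2 * k) := pow_le_pow_right₀ (by norm_num) (by omega)
          _ = 4 ^ k := by rw [pow_mul]; norm_num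
    _ = (4 * A ^ (2 * k - 2)) ^ k := (mul_pow _ _ _).symm

theorem pow_le_two_of_pow_two_mul_le {κ : ℕ} {A B : ℝ} (hAB : A ^ 2 ≤ B)
    (h : B ^ (2 * κ) ≤ 2 * A ^ (2 * κ)) : B ^ κ ≤ 2 := by
  have hB : 0 ≤ B ^ κ := pow_nonneg ((sq_nonneg A).trans hAB) κ
  have : (B ^ κ) ^ 2 ≤ 2 * B ^ κ :=
    calc (B ^ κ) ^ 2 = B ^ (2 * κ) := by rw [← pow_mul, mul_comm]
      _ ≤ 2 * (A ^ 2) ^ κ := by rwa [← pow_mul]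
      _ ≤ 2 * B ^ κ := by gcongr
  nlinarith

theorem pow_two_mul_sub_one_le_sq {κ : ℕ} {x c : ℝ} (hx : 0 ≤ x) (hc : 1 ≤ c)
    (h : x ^ κ ≤ c) :
    x ^ (2 * κ - 1) ≤ c ^ 2 := by
  rcases le_total x 1 with hx1 | hx1
  · nlinarith [pow_le_one₀ hx hx1 (n := 2 * κ - 1)]
  · calc x ^ (2 * κ - 1) ≤ x ^ (κ * 2) := pow_le_pow_right₀ hx1 (by omega)
      _ = (x ^ κ) ^ 2 := pow_mul _ _ _
      _ ≤ c ^ 2 := pow_le_pow_left₀ (pow_nonneg hx κ) h 2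

theorem residual_le_of_pow_le {k : ℕ} (hk : 1 ≤ k) {A B : ℝ} (hAB : A ^ 2 ≤ B)
    (h : B ^ k ≤ 2 * A ^ k) :
    B ^ (2 * k - 1) - 2 * A ^ k * B ^ (k - 1) + A ^ (2 * k - 2) ≤ B ^ (k - 1) := by
  have hB : 0 ≤ B := (sq_nonneg A).trans hAB
  have h1 : B ^ (2 * k - 1) = B ^ (k - 1) * B ^ k := by rw [← pow_add]; congr 1; omega
  have h2 : A ^ (2 * k - 2) = (A ^ 2) ^ (k - 1) := by rw [← pow_mul]; congr 1; omega
  have h3 := mul_le_mul_of_nonneg_left h (pow_nonneg hB (k - 1))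
  have h4 : (A ^ 2) ^ (k - 1) ≤ B ^ (k - 1) := pow_le_pow_left₀ (sq_nonneg A) hAB _
  rw [h1, h2]
  linarith

theorem add_pow_two_mul_sub_one_le {κ : ℕ} {B ε : ℝ} (hB : 0 ≤ B) (hBκ : B ^ κ ≤ 2)
    (hε : 0 ≤ ε) (hκε : 20 * κ * ε ≤ 1) :
    (B + (4 * ε + 4 * ε ^ 2)) ^ (2 * κ - 1) ≤ (200 / 79) ^ 2 := by
  have hκe : κ * (4 * ε + 4 * ε ^ 2) ≤ 21 / 100 := by
    have hκ : (κ : ℝ) ≤ κ ^ 2 := by exact_mod_cast Nat.le_self_pow two_ne_zero κ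
    nlinarith [mul_le_mul_of_nonneg_right hκ (sq_nonneg ε)]
  have h1e : (1 + (4 * ε + 4 * ε ^ 2)) ^ κ ≤ 100 / 79 :=
    calc (1 + (4 * ε + 4 * ε ^ 2)) ^ κ ≤ Real.exp (4 * ε + 4 * ε ^ 2) ^ κ :=
          pow_le_pow_left₀ (by positivity)
            (by linarith [Real.add_one_le_exp (4 * ε + 4 * ε ^ 2)]) κ
      _ = Real.exp (κ * (4 * ε + 4 * ε ^ 2)) := (Real.exp_nat_mul _ κ).symm
      _ ≤ 1 / (1 - κ * (4 * ε + 4 * ε ^ 2)) :=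
          Real.exp_bound_div_one_sub_of_interval (by positivity) (by linarith)
      _ ≤ 100 / 79 := by rw [div_le_div_iff₀ (by linarith) (by norm_num)]; linarith
  have hmax : max B 1 ^ κ ≤ 2 := by
    rcases le_total B 1 with h | h
    · simp [max_eq_right h]
    · simpa [max_eq_left h] using hBκ
  refine pow_two_mul_sub_one_le_sq (by positivity) (by norm_num) ?_
  calc (B + (4 * ε + 4 * ε ^ 2)) ^ κ ≤ (max B 1 * (1 + (4 * ε + 4 * ε ^ 2))) ^ κ := by
        refine pow_le_pow_left₀ (by positivity) ?_ κ
        nlinarith [le_max_left B 1, le_max_right B 1]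
    _ = max B 1 ^ κ * (1 + (4 * ε + 4 * ε ^ 2)) ^ κ := mul_pow _ _ _
    _ ≤ 2 * (100 / 79) := mul_le_mul hmax h1e (by positivity) (by norm_num)
    _ = 200 / 79 := by norm_num

noncomputable def popResidual (d k : ℕ) (p wstar w : Fin d → ℝ) (j : Fin d) : ℝ :=
  normB d p w ^ (k - 1) * w j - alignA d p wstar w ^ (k - 1) * wstar j

noncomputable def popGrad (d k : ℕ) (p wstar w : Fin d → ℝ) (j : Fin d) : ℝ :=
  k * p j * popResidual d k p wstar w j

section WeightedSums

variable {d : ℕ} {p : Fin d → ℝ}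

theorem normB_nonneg (hp : ∀ j, 0 ≤ p j) (w : Fin d → ℝ) : 0 ≤ normB d p w :=
  Finset.sum_nonneg fun j _ => mul_nonneg (hp j) (sq_nonneg _)

theorem sq_sum_mul_mul_le (hp : ∀ j, 0 ≤ p j) (u v : Fin d → ℝ) :
    (∑ j, p j * u j * v j) ^ 2 ≤ normB d p u * normB d p v :=
  Finset.sum_sq_le_sum_mul_sum_of_sq_le_mul _ (fun j _ => mul_nonneg (hp j) (sq_nonneg _))
    (fun j _ => mul_nonneg (hp j) (sq_nonneg _)) fun j _ => le_of_eq (by ring)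

theorem sq_alignA_le_normB (hp : ∀ j, 0 ≤ p j) {wstar : Fin d → ℝ}
    (hwstar : normB d p wstar = 1) (w : Fin d → ℝ) :
    alignA d p wstar w ^ 2 ≤ normB d p w := by
  have h := sq_sum_mul_mul_le hp w wstar
  rwa [hwstar, mul_one] at h

theorem alignA_sub (wstar w δ : Fin d → ℝ) :
    alignA d p wstar (w - δ) = alignA d p wstar w - alignA d p wstar δ := by
  simp only [alignA, Pi.sub_apply, mul_sub, sub_mul, Finset.sum_sub_distrib]

theorem normB_sub (w δ : Fin d → ℝ) :
    normB d p (w - δ) = normB d p w - 2 * ∑ j, p j * w j * δ j + normB d p δ := by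
  simp only [normB, Finset.mul_sum, ← Finset.sum_sub_distrib, ← Finset.sum_add_distrib,
    Pi.sub_apply]
  exact Finset.sum_congr rfl fun j _ => by ring

theorem normB_smul (c : ℝ) (v : Fin d → ℝ) : normB d p (c • v) = c ^ 2 * normB d p v := by
  simp only [normB, Finset.mul_sum, Pi.smul_apply, smul_eq_mul]
  exact Finset.sum_congr rfl fun j _ => by ring

theorem normB_le_mul_sum_sq {m : ℝ} (hpm : ∀ j, p j ≤ m) (v : Fin d → ℝ) :
    normB d p v ≤ m * ∑ j, v j ^ 2 := by
  rw [Finset.mul_sum]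
  exact Finset.sum_le_sum fun j _ => mul_le_mul_of_nonneg_right (hpm j) (sq_nonneg _)

end WeightedSums

section PopulationLoss

variable {d k : ℕ} {p wstar : Fin d → ℝ}

theorem popLoss_nonneg (hp : ∀ j, 0 ≤ p j) (hwstar : normB d p wstar = 1) (w : Fin d → ℝ) :
    0 ≤ popLoss d k p wstar w := by
  have hAB := sq_alignA_le_normB hp hwstar w
  have hpow : (alignA d p wstar w ^ k) ^ 2 ≤ normB d p w ^ k := by
    rw [← pow_mul, mul_comm, pow_mul]
    exact pow_le_pow_left₀ (sq_nonneg _) hAB k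
  unfold popLoss
  nlinarith [sq_nonneg (alignA d p wstar w ^ k - 1)]

theorem sum_mul_sq_popResidual (hwstar : normB d p wstar = 1) (hk : 1 ≤ k) (w : Fin d → ℝ) :
    ∑ j, p j * popResidual d k p wstar w j ^ 2
      = normB d p w ^ (2 * k - 1) - 2 * alignA d p wstar w ^ k * normB d p w ^ (k - 1)
        + alignA d p wstar w ^ (2 * k - 2) := by
  set A := alignA d p wstar w
  set B := normB d p w
  have hsum : ∑ j, p j * popResidual d k p wstar w j ^ 2
      = (B ^ (k - 1)) ^ 2 * B - 2 * (B ^ (k - 1) * A ^ (k - 1)) * A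
        + (A ^ (k - 1)) ^ 2 * normB d p wstar := by
    simp only [popResidual, B, A, normB, alignA, Finset.mul_sum, ← Finset.sum_sub_distrib,
      ← Finset.sum_add_distrib]
    exact Finset.sum_congr rfl fun j _ => by ring
  obtain ⟨n, rfl⟩ := Nat.exists_eq_add_of_le' hk
  rw [hsum, hwstar]
  simp only [show 2 * (n + 1) - 1 = 2 * n + 1 by omega, show 2 * (n + 1) - 2 = 2 * n by omega,
    Nat.add_sub_cancel]
  ring

theorem sum_sq_popGrad_le {m : ℝ} (hp : ∀ j, 0 ≤ p j) (hpm : ∀ j, p j ≤ m)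
    (w : Fin d → ℝ) :
    ∑ j, popGrad d k p wstar w j ^ 2
      ≤ k ^ 2 * m * ∑ j, p j * popResidual d k p wstar w j ^ 2 := by
  rw [Finset.mul_sum]
  refine Finset.sum_le_sum fun j _ => ?_
  have := mul_le_mul_of_nonneg_left (hpm j)
    (mul_nonneg (hp j) (sq_nonneg (k * popResidual d k p wstar w j)))
  simp only [popGrad]
  linarith [show (k * p j * popResidual d k p wstar w j) ^ 2
    = p j * (p j * (k * popResidual d k p wstar w j) ^ 2) by ring]

theorem mul_sum_le_sum_sq_popGrad {pmin : ℝ} (hp : ∀ j, 0 ≤ p j) (hpmin : ∀ j, pmin ≤ p j)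
    (w : Fin d → ℝ) :
    k ^ 2 * pmin * ∑ j, p j * popResidual d k p wstar w j ^ 2
      ≤ ∑ j, popGrad d k p wstar w j ^ 2 := by
  rw [Finset.mul_sum]
  refine Finset.sum_le_sum fun j _ => ?_
  have := mul_le_mul_of_nonneg_right (hpmin j)
    (mul_nonneg (hp j) (sq_nonneg (k * popResidual d k p wstar w j)))
  simp only [popGrad]
  linarith [show (k * p j * popResidual d k p wstar w j) ^ 2
    = p j * (p j * (k * popResidual d k p wstar w j) ^ 2) by ring]

theorem popLoss_pl (hp : ∀ j, 0 ≤ p j) (hwstar : normB d p wstar = 1) (hk : 1 ≤ k)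
    {pmin : ℝ} (hpmin0 : 0 ≤ pmin) (hpmin : ∀ j, pmin ≤ p j) (w : Fin d → ℝ) :
    2 * k * pmin * alignA d p wstar w ^ (2 * k - 2) * popLoss d k p wstar w
      ≤ ∑ j, popGrad d k p wstar w j ^ 2 := by
  have hlow := mul_sum_le_sum_sq_popGrad (k := k) (wstar := wstar) hp hpmin w
  rw [sum_mul_sq_popResidual hwstar hk] at hlow
  refine le_trans ?_ hlow
  have := mul_le_mul_of_nonneg_left
    (pow_mul_loss_le_mul_residual hk (sq_alignA_le_normB hp hwstar w))
    (by positivity : (0 : ℝ) ≤ k * pmin)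
  unfold popLoss
  linarith

theorem sum_sq_popGrad_le_of_pow_le (hp : ∀ j, 0 ≤ p j) (hwstar : normB d p wstar = 1)
    (hk : 1 ≤ k) {m : ℝ} (hm : 0 ≤ m) (hpm : ∀ j, p j ≤ m) {w : Fin d → ℝ}
    (hw : normB d p w ^ k ≤ 2 * alignA d p wstar w ^ k) :
    ∑ j, popGrad d k p wstar w j ^ 2 ≤ k ^ 2 * m * normB d p w ^ (k - 1) := by
  refine (sum_sq_popGrad_le hp hpm w).trans (mul_le_mul_of_nonneg_left ?_ (by positivity))
  rw [sum_mul_sq_popResidual hwstar hk]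
  exact residual_le_of_pow_le hk (sq_alignA_le_normB hp hwstar w) hw

theorem normB_smul_popGrad_le {m : ℝ} (hpm : ∀ j, p j ≤ m) (c : ℝ) (w : Fin d → ℝ) :
    normB d p (c • popGrad d k p wstar w) ≤ c ^ 2 * m * ∑ j, popGrad d k p wstar w j ^ 2 := by
  rw [normB_smul, mul_assoc]
  exact mul_le_mul_of_nonneg_left (normB_le_mul_sum_sq hpm _) (sq_nonneg c)

theorem popLoss_sub_le (hp : ∀ j, 0 ≤ p j) (hke : Even k) (hk : 2 ≤ k) (w δ : Fin d → ℝ)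
    {β : ℝ} (hβ : normB d p w ≤ β) (hβ' : normB d p (w - δ) ≤ β) :
    popLoss d k p wstar (w - δ) ≤ popLoss d k p wstar w - ∑ j, popGrad d k p wstar w j * δ j
      + k / 2 * normB d p w ^ (k - 1) * normB d p δ
      + k * (k - 1) / 4 * β ^ (k - 2) * (normB d p (w - δ) - normB d p w) ^ 2 := by
  have hfirst : ∑ j, popGrad d k p wstar w j * δ j
      = k * normB d p w ^ (k - 1) * ∑ j, p j * w j * δ j
        - k * alignA d p wstar w ^ (k - 1) * alignA d p wstar δ := by
    simp only [popGrad, popResidual, alignA, Finset.mul_sum, ← Finset.sum_sub_distrib]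
    exact Finset.sum_congr rfl fun j _ => by ring
  have hB := pow_le_tangent_add_sq (normB_nonneg hp w) (normB_nonneg hp (w - δ)) hβ hβ' hk
  have hA := hke.pow_tangent_le (alignA d p wstar (w - δ)) (alignA d p wstar w)
  rw [alignA_sub] at hA
  rw [normB_sub] at hB ⊢
  unfold popLoss
  rw [alignA_sub, hfirst, normB_sub]
  linear_combination (1 / 2) * hB + hA

theorem normB_pow_le_two_of_pow_le (hp : ∀ j, 0 ≤ p j) (hwstar : normB d p wstar = 1) {κ : ℕ}
    (hκ : k = κ + κ) {w : Fin d → ℝ} (hw : normB d p w ^ k ≤ 2 * alignA d p wstar w ^ k) :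
    normB d p w ^ κ ≤ 2 :=
  pow_le_two_of_pow_two_mul_le (sq_alignA_le_normB hp hwstar w) (by rwa [two_mul, ← hκ])

theorem normB_smul_popGrad_le_of_pow_le (hp : ∀ j, 0 ≤ p j) (hwstar : normB d p wstar = 1)
    (hke : Even k) (hk : 2 ≤ k) {m : ℝ} (hm : 0 ≤ m) (hpm : ∀ j, p j ≤ m) (η : ℝ)
    {w : Fin d → ℝ} (hw : normB d p w ^ k ≤ 2 * alignA d p wstar w ^ k) :
    normB d p (η • popGrad d k p wstar w) ≤ 4 * (η * k * m) ^ 2 ∧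
      normB d p w * normB d p (η • popGrad d k p wstar w) ≤ 4 * (η * k * m) ^ 2 := by
  obtain ⟨κ, hκ⟩ := hke
  have hB0 := normB_nonneg hp w
  have hBκ := normB_pow_le_two_of_pow_le hp hwstar hκ hw
  have hBk1 : normB d p w ^ (k - 1) ≤ 4 := by
    rw [hκ, ← two_mul]
    exact (pow_two_mul_sub_one_le_sq hB0 one_le_two hBκ).trans_eq (by norm_num)
  have hBk : normB d p w * normB d p w ^ (k - 1) ≤ 4 := by
    rw [← pow_succ', show k - 1 + 1 = κ * 2 by omega, pow_mul]
    nlinarith [pow_nonneg hB0 κ]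
  have hD := (normB_smul_popGrad_le (wstar := wstar) (k := k) hpm η w).trans
    (mul_le_mul_of_nonneg_left (sum_sq_popGrad_le_of_pow_le hp hwstar (by omega) hm hpm hw)
      (by positivity))
  constructor
  · calc _ ≤ η ^ 2 * m * (k ^ 2 * m * normB d p w ^ (k - 1)) := hD
      _ ≤ η ^ 2 * m * (k ^ 2 * m * 4) := by gcongr
      _ = 4 * (η * k * m) ^ 2 := by ring
  · calc _ ≤ normB d p w * (η ^ 2 * m * (k ^ 2 * m * normB d p w ^ (k - 1))) := by gcongr
      _ = (η * k * m) ^ 2 * (normB d p w * normB d p w ^ (k - 1)) := by ring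
      _ ≤ (η * k * m) ^ 2 * 4 := by gcongr
      _ = 4 * (η * k * m) ^ 2 := by ring

theorem normB_gd_step_le (hp : ∀ j, 0 ≤ p j) (hwstar : normB d p wstar = 1)
    (hke : Even k) (hk : 2 ≤ k) {m η : ℝ} (hm : 0 ≤ m) (hpm : ∀ j, p j ≤ m)
    (hη0 : 0 ≤ η) {w : Fin d → ℝ}
    (hw : normB d p w ^ k ≤ 2 * alignA d p wstar w ^ k) :
    normB d p (w - η • popGrad d k p wstar w)
        ≤ normB d p w + (4 * (η * k * m) + 4 * (η * k * m) ^ 2) ∧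
      (normB d p (w - η • popGrad d k p wstar w) - normB d p w) ^ 2
        ≤ 4 * normB d p (η • popGrad d k p wstar w)
          * (normB d p w + (4 * (η * k * m) + 4 * (η * k * m) ^ 2)) := by
  obtain ⟨hDε, hBD⟩ := normB_smul_popGrad_le_of_pow_le hp hwstar hke hk hm hpm η hw
  have hS := sq_sum_mul_mul_le hp w (η • popGrad d k p wstar w)
  have hD0 := normB_nonneg hp (η • popGrad d k p wstar w)
  have hε0 : 0 ≤ η * k * m := by positivity
  rw [normB_sub]
  set S := ∑ j, p j * w j * (η • popGrad d k p wstar w) j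
  set D := normB d p (η • popGrad d k p wstar w)
  set ε := η * k * m
  have hSε : |S| ≤ 2 * ε := abs_le_of_sq_le_sq (by linarith) (by positivity)
  refine ⟨by linarith [neg_abs_le S], ?_⟩
  have h1 : -S * D ≤ 2 * ε * D := mul_le_mul_of_nonneg_right ((neg_le_abs S).trans hSε) hD0
  have h2 : D * D ≤ 4 * ε ^ 2 * D := mul_le_mul_of_nonneg_right hDε hD0
  have h3 : 0 ≤ D * ε := mul_nonneg hD0 hε0
  have h4 : 0 ≤ D * ε ^ 2 := mul_nonneg hD0 (sq_nonneg ε)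
  linear_combination 4 * hS + 4 * h1 + h2 + 8 * h3 + 12 * h4

theorem popLoss_sub_smul_popGrad_le (hp : ∀ j, 0 ≤ p j) (hwstar : normB d p wstar = 1)
    (hke : Even k) (hk : 2 ≤ k) {m η : ℝ} (hm : 0 ≤ m) (hpm : ∀ j, p j ≤ m)
    (hη0 : 0 ≤ η) (hη : 10 * k ^ 2 * m * η ≤ 1) {w : Fin d → ℝ}
    (hw : normB d p w ^ k ≤ 2 * alignA d p wstar w ^ k) :
    popLoss d k p wstar (w - η • popGrad d k p wstar w)
      ≤ popLoss d k p wstar w - η / 4 * ∑ j, popGrad d k p wstar w j ^ 2 := by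
  obtain ⟨hB', hΔ⟩ := normB_gd_step_le hp hwstar hke hk hm hpm hη0 hw
  have hexp := popLoss_sub_le (wstar := wstar) hp hke hk w (η • popGrad d k p wstar w)
    (le_add_of_nonneg_right (by positivity)) hB'
  have hfirst : ∑ j, popGrad d k p wstar w j * (η • popGrad d k p wstar w) j
      = η * ∑ j, popGrad d k p wstar w j ^ 2 := by
    simp only [Pi.smul_apply, smul_eq_mul, Finset.mul_sum]
    exact Finset.sum_congr rfl fun j _ => by ring
  have hD := normB_smul_popGrad_le (wstar := wstar) (k := k) hpm η w
  obtain ⟨κ, hκ⟩ := hke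
  have hBκ := normB_pow_le_two_of_pow_le hp hwstar hκ hw
  have hB0 := normB_nonneg hp w
  have hk2 : (2 : ℝ) ≤ k := by exact_mod_cast hk
  rw [hfirst] at hexp
  set N := ∑ j, popGrad d k p wstar w j ^ 2
  set B := normB d p w
  set D := normB d p (η • popGrad d k p wstar w)
  set β := B + (4 * (η * k * m) + 4 * (η * k * m) ^ 2)
  have hD0 : 0 ≤ D := normB_nonneg hp _
  have hηN : 0 ≤ η * N := mul_nonneg hη0 (Finset.sum_nonneg fun j _ => sq_nonneg _)
  have hmid : k / 2 * B ^ (k - 1) * D ≤ 1 / 10 * (η * N) := by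
    have hBk1 : B ^ (k - 1) ≤ 4 := by
      rw [hκ, ← two_mul]
      exact (pow_two_mul_sub_one_le_sq hB0 one_le_two hBκ).trans_eq (by norm_num)
    calc k / 2 * B ^ (k - 1) * D ≤ k / 2 * 4 * (η ^ 2 * m * N) := by gcongr
      _ = 1 / 10 * (20 * k * m * η) * (η * N) := by ring
      _ ≤ 1 / 10 * 1 * (η * N) := by gcongr; nlinarith
      _ = 1 / 10 * (η * N) := by ring
  have hrem : k * (k - 1) / 4 * β ^ (k - 2)
      * (normB d p (w - η • popGrad d k p wstar w) - B) ^ 2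
      ≤ (200 / 79) ^ 2 / 10 * (η * N) := by
    have hβk : β ^ (k - 1) ≤ (200 / 79) ^ 2 := by
      rw [hκ, ← two_mul]
      refine add_pow_two_mul_sub_one_le hB0 hBκ (by positivity) ?_
      have : (k : ℝ) = 2 * κ := by rw [hκ]; push_cast; ring
      nlinarith
    have hββ : β ^ (k - 2) * β = β ^ (k - 1) := by rw [← pow_succ]; congr 1; omega
    have hk1 : (0 : ℝ) ≤ k - 1 := by linarith
    calc k * (k - 1) / 4 * β ^ (k - 2) * (normB d p (w - η • popGrad d k p wstar w) - B) ^ 2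
        ≤ k * (k - 1) / 4 * β ^ (k - 2) * (4 * D * β) := by gcongr
      _ = k * (k - 1) * β ^ (k - 1) * D := by rw [← hββ]; ring
      _ ≤ k ^ 2 * (200 / 79) ^ 2 * (η ^ 2 * m * N) := by gcongr; nlinarith only [hk1]
      _ = (200 / 79) ^ 2 / 10 * (10 * k ^ 2 * m * η) * (η * N) := by ring
      _ ≤ (200 / 79) ^ 2 / 10 * 1 * (η * N) := by gcongr
      _ = (200 / 79) ^ 2 / 10 * (η * N) := by ring
  -- the second-order terms cost at most `1/10 + 13/20` of the first-order gain `η N`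
  have hc := mul_le_mul_of_nonneg_right (by norm_num : (200 / 79 : ℝ) ^ 2 / 10 ≤ 13 / 20) hηN
  linarith

theorem popLoss_gd_step_le (hp : ∀ j, 0 ≤ p j) (hwstar : normB d p wstar = 1)
    (hke : Even k) (hk : 2 ≤ k) {m η pmin a : ℝ} (hm : 0 ≤ m) (hpm : ∀ j, p j ≤ m)
    (hpmin0 : 0 ≤ pmin) (hpmin : ∀ j, pmin ≤ p j) (hη0 : 0 ≤ η)
    (hη : 10 * k ^ 2 * m * η ≤ 1)
    {w : Fin d → ℝ} (hw : normB d p w ^ k + a ^ k ≤ 2 * alignA d p wstar w ^ k) :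
    popLoss d k p wstar (w - η • popGrad d k p wstar w)
      ≤ (1 - η * k * pmin * a ^ (2 * k - 2) / 8) * popLoss d k p wstar w := by
  have hBk := pow_nonneg (normB_nonneg hp w) k
  have hdesc := popLoss_sub_smul_popGrad_le hp hwstar hke hk hm hpm hη0 hη
    (by linarith [hke.pow_nonneg a])
  have hpl := popLoss_pl (k := k) hp hwstar (by omega) hpmin0 hpmin w
  have halign := pow_two_mul_sub_two_le_of_pow_le hke (by omega) (by linarith : a ^ k ≤ _)
  have hL := popLoss_nonneg (k := k) hp hwstar w
  have : η * k * pmin * a ^ (2 * k - 2) / 8 * popLoss d k p wstar w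
      ≤ η / 4 * ∑ j, popGrad d k p wstar w j ^ 2 :=
    calc η * k * pmin * a ^ (2 * k - 2) / 8 * popLoss d k p wstar w
        ≤ η * k * pmin * (4 * alignA d p wstar w ^ (2 * k - 2)) / 8 * popLoss d k p wstar w := by
          gcongr
      _ = η / 4 * (2 * k * pmin * alignA d p wstar w ^ (2 * k - 2) * popLoss d k p wstar w) := by
          ring
      _ ≤ η / 4 * ∑ j, popGrad d k p wstar w j ^ 2 := by gcongr
  linarith

end PopulationLoss

theorem one_sub_mul_pow_mem_Icc {k : ℕ} (hk : 1 ≤ k) {m η q a : ℝ} (hη0 : 0 ≤ η)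
    (hq0 : 0 ≤ q) (hqm : q ≤ m) (ha : |a| ≤ 1) (hη : 10 * k ^ 2 * m * η ≤ 1) :
    1 - η * k * q * a ^ (2 * k - 2) / 8 ∈ Set.Icc (0 : ℝ) 1 := by
  have he : Even (2 * k - 2) := ⟨k - 1, by omega⟩
  have ha0 := he.pow_nonneg a
  have ha1 : a ^ (2 * k - 2) ≤ 1 := by rw [← he.pow_abs]; exact pow_le_one₀ (abs_nonneg a) ha
  have hk1 : (1 : ℝ) ≤ k := by exact_mod_cast hk
  have hc0 : 0 ≤ η * k * q * a ^ (2 * k - 2) := by positivity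
  have hm : 0 ≤ m := hq0.trans hqm
  have hc1 : η * k * q * a ^ (2 * k - 2) ≤ η * k * m * 1 := by gcongr
  have hkm : η * k * m ≤ 10 * k ^ 2 * m * η := by
    nlinarith [mul_nonneg (mul_nonneg hη0 hm) (sub_nonneg.2 hk1)]
  constructor <;> linarith

theorem le_pow_mul_of_le_mul {f : ℕ → ℝ} {r : ℝ} (hf : ∀ t, 0 ≤ f t) (hr0 : 0 ≤ r)
    (hr1 : r ≤ 1) (h : ∀ t, f t ≤ f 0 → f (t + 1) ≤ r * f t) (t : ℕ) :
    f t ≤ r ^ t * f 0 := by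
  induction t with
  | zero => simp
  | succ t ih =>
    have hft : f t ≤ f 0 := ih.trans (mul_le_of_le_one_left (hf 0) (pow_le_one₀ hr0 hr1))
    calc f (t + 1) ≤ r * f t := h t hft
      _ ≤ r * (r ^ t * f 0) := mul_le_mul_of_nonneg_left ih hr0
      _ = r ^ (t + 1) * f 0 := by ring

theorem population_gd_linear_convergence_general (d k : ℕ) (hk : 2 ≤ k)
    (hkeven : Even k)
    (p : Fin d → ℝ) (hp : ∀ j, 0 < p j) (hp1 : ∑ j, p j = 1)
    (pmin : ℝ) (hpmin : IsLeast (Set.range p) pmin)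
    (wstar : Fin d → ℝ) (hws : ∀ j, wstar j = 1 ∨ wstar j = -1)
    (η : ℝ) (hη0 : 0 < η)
    (hη : η ≤ 1 / (10 * (k : ℝ) ^ 2 * Real.sqrt (∑ j, (p j) ^ 2)))
    (w : ℕ → Fin d → ℝ)
    (hupd : ∀ t, w (t + 1) = fun j => w t j -
        η * ((k : ℝ) * p j * ((normB d p (w t)) ^ (k - 1) * w t j
            - (alignA d p wstar (w t)) ^ (k - 1) * wstar j)))
    (hinit : normB d p (w 0) ≤ |alignA d p wstar (w 0)|) :
    ∀ t : ℕ, popLoss d k p wstar (w t)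
      ≤ (1 - η * k * pmin * (alignA d p wstar (w 0)) ^ (2 * k - 2) / 8) ^ t
          * popLoss d k p wstar (w 0) := by
  set m := Real.sqrt (∑ j, p j ^ 2)
  set a := alignA d p wstar (w 0)
  have hp0 : ∀ j, 0 ≤ p j := fun j => (hp j).le
  have hwstar : normB d p wstar = 1 := by
    rw [← hp1]; exact Finset.sum_congr rfl fun j _ => by rcases hws j with h | h <;> simp [h]
  have hpm : ∀ j, p j ≤ m := fun j => Real.le_sqrt_of_sq_le
    (Finset.single_le_sum (fun i _ => sq_nonneg (p i)) (Finset.mem_univ j))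
  have hηm : 10 * k ^ 2 * m * η ≤ 1 := by
    rwa [le_div_iff₀ (one_div_pos.mp (hη0.trans_le hη)), mul_comm] at hη
  obtain ⟨j₀, rfl⟩ := hpmin.1
  have ha : |a| ≤ 1 := by
    nlinarith [sq_alignA_le_normB hp0 hwstar (w 0), sq_abs a, abs_nonneg a]
  obtain ⟨hr0, hr1⟩ :=
    one_sub_mul_pow_mem_Icc (by omega) hη0.le (hp j₀).le (hpm j₀) ha hηm
  have hL0 : normB d p (w 0) ^ k + a ^ k ≤ 2 * a ^ k := by
    have := pow_le_pow_left₀ (normB_nonneg hp0 _) hinit k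
    rw [hkeven.pow_abs] at this; linarith
  refine le_pow_mul_of_le_mul (fun t => popLoss_nonneg hp0 hwstar _) hr0 hr1 fun t ht => ?_
  rw [show w (t + 1) = w t - η • popGrad d k p wstar (w t) from hupd t]
  refine popLoss_gd_step_le hp0 hwstar hkeven hk (Real.sqrt_nonneg _) hpm (hp j₀).le
    (fun j => hpmin.2 ⟨j, rfl⟩) hη0.le hηm ?_
  unfold popLoss at ht
  linarith

/-- Linear convergence of population gradient descent: for `k` even with `k ≥ 2`,
`p_j > 0`, step size `0 < η ≤ 1/(10 k² ‖p‖₂)`, gradient-descent iterates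
`w(t+1) = w(t) − η ∇L(w(t))`, and an initialization with `0 < B(w(0)) ≤ |A(w(0))|`,
the population loss satisfies
`L(w(t)) ≤ (1 − η k p_min A(w(0))^{2k−2}/8)^t · L(w(0))` for all `t`. -/
theorem population_gd_linear_convergence (d k : ℕ) (hd : 0 < d) (hk : 2 ≤ k)
    (hkeven : Even k)
    (p : Fin d → ℝ) (hp : ∀ j, 0 < p j) (hp1 : ∑ j, p j = 1)
    (pmin : ℝ) (hpmin : IsLeast (Set.range p) pmin)
    (wstar : Fin d → ℝ) (hws : ∀ j, wstar j = 1 ∨ wstar j = -1)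
    (η : ℝ) (hη0 : 0 < η)
    (hη : η ≤ 1 / (10 * (k : ℝ) ^ 2 * Real.sqrt (∑ j, (p j) ^ 2)))
    (w : ℕ → Fin d → ℝ)
    (hupd : ∀ t, w (t + 1) = fun j => w t j -
        η * ((k : ℝ) * p j * ((normB d p (w t)) ^ (k - 1) * w t j
            - (alignA d p wstar (w t)) ^ (k - 1) * wstar j)))
    (hinitB : 0 < normB d p (w 0))
    (hinit : normB d p (w 0) ≤ |alignA d p wstar (w 0)|) :
    ∀ t : ℕ, popLoss d k p wstar (w t)
      ≤ (1 - η * k * pmin * (alignA d p wstar (w 0)) ^ (2 * k - 2) / 8) ^ t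
          * popLoss d k p wstar (w 0) :=
  population_gd_linear_convergence_general d k hk hkeven p hp hp1 pmin hpmin wstar hws η hη0 hη w
    hupd hinit
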